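/- arXiv:2305.14801 — 2 statements merged into one kernel-verified Lean document; each statement's English description precedes it below -/
import Mathlib

section
/- Let U ⊂ ℝ^n be an open set with finite measure and let f : U × ℝ^m → ℝ be a normal integrand bounded from below. Let (u_k) be a uniformly bounded sequence of functions in L^∞(U;ℝ^m) generating a Young measure ν = {ν_x}_{x∈U}. Then liminf_{k→∞} esssup_{x∈U} f(x, u_k(x)) ≥ esssup_{x∈U} f̄(x), where f̄(x) := ν_x-esssup_{ξ∈ℝ^m} f(x,ξ). -/
open MeasureTheory Filter Topology Bornology ZeroAtInfty NNReal ENNReal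

noncomputable section

/-- A Young measure on `E`, parametrized over `(α, μ)`: a weakly* measurable family of
probability measures. -/
def IsYoungMeasure {α E : Type*} [MeasurableSpace α] [MeasurableSpace E] [TopologicalSpace E]
    (μ : Measure α) (ν : α → Measure E) : Prop :=
  (∀ᵐ x ∂μ, IsProbabilityMeasure (ν x)) ∧
  ∀ φ : C₀(E, ℝ), Measurable fun x => ∫ ξ, φ ξ ∂(ν x)

/-- The sequence of measurable functions `z j` generates the Young measure `ν`:
for every `h ∈ L¹` and every `φ ∈ C₀`, `∫ h(x) φ(z_j(x)) dx → ∫ h(x) ⟨ν_x, φ⟩ dx`. -/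
def GeneratesYM {α E : Type*} [MeasurableSpace α] [MeasurableSpace E] [TopologicalSpace E]
    (μ : Measure α) (z : ℕ → α → E) (ν : α → Measure E) : Prop :=
  (∀ j, Measurable (z j)) ∧ IsYoungMeasure μ ν ∧
  ∀ h : α → ℝ, Integrable h μ → ∀ φ : C₀(E, ℝ),
    Tendsto (fun j => ∫ x, h x * φ (z j x) ∂μ) atTop
      (𝓝 (∫ x, h x * ∫ ξ, φ ξ ∂(ν x) ∂μ))

/-! If `t > liminf_k esssup_x f(x, u_k(x))`, then `f(x, u_k(x)) ≤ t` a.e. for infinitely many `k`.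
Test the convergence `u_k → ν` against `1_A(x) φ(ξ)`, where `φ ≥ 0` is a bump equal to `1` on
`closedBall q r` and vanishing off `ball q (2r)`, and `A` is the set of `x` with `f(x, ·) > t` on
`ball q (2r)`: along those `k` the tested integrals vanish, hence `ν_x(closedBall q r) = 0` for
a.e. `x ∈ A`. Since `f(x, ·)` is lower semicontinuous, `{f(x, ·) > t}` is open and is covered by
countably many such balls with rational data, so `f(x, ·) ≤ t` holds `ν_x`-a.e. -/

open Metric Set

theorem measure_eq_zero_of_isOpen_of_measure_closedBall_eq_zero {E : Type*} [PseudoMetricSpace E]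
    [MeasurableSpace E] {D : Set E} (hD : D.Countable) (hDd : Dense D) {ν : Measure E}
    {O : Set E} (hO : IsOpen O)
    (h : ∀ q ∈ D, ∀ r : ℚ, 0 < r → ball q (2 * r) ⊆ O → ν (closedBall q r) = 0) : ν O = 0 := by
  let P : Set (E × ℚ) := {p | p.1 ∈ D ∧ 0 < p.2 ∧ ball p.1 (2 * p.2) ⊆ O}
  have hP : P.Countable := (hD.prod countable_univ).mono fun p hp => mem_prod.2 ⟨hp.1, mem_univ _⟩
  refine measure_mono_null (t := ⋃ p ∈ P, closedBall p.1 p.2) ?_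
    ((measure_biUnion_null_iff hP).2 fun p hp => h p.1 hp.1 p.2 hp.2.1 hp.2.2)
  intro ξ hξ
  obtain ⟨ε, hε, hεO⟩ := Metric.isOpen_iff.1 hO ξ hξ
  obtain ⟨r, hr0, hrε⟩ := exists_rat_btwn (div_pos hε three_pos)
  obtain ⟨q, hqD, hξq⟩ := hDd.exists_dist_lt ξ hr0
  refine mem_iUnion₂.2 ⟨(q, r), ⟨hqD, Rat.cast_pos.1 hr0, fun η hη => hεO ?_⟩,
    mem_closedBall.2 hξq.le⟩
  rw [mem_ball] at hη ⊢
  linarith [dist_triangle η q ξ, dist_comm ξ q]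

section

variable {α E : Type*} [MeasurableSpace α] {μ : Measure α} [IsFiniteMeasure μ] [TopologicalSpace E]
  [MeasurableSpace E] {u : ℕ → α → E} {ν : α → Measure E}

namespace GeneratesYM

theorem tendsto_setIntegral (hgen : GeneratesYM μ u ν) {B : Set α}
    (hB : MeasurableSet B) (φ : C₀(E, ℝ)) :
    Tendsto (fun k => ∫ x in B, φ (u k x) ∂μ) atTop (𝓝 (∫ x in B, ∫ ξ, φ ξ ∂(ν x) ∂μ)) := by
  have h := hgen.2.2 (B.indicator 1) ((integrable_const 1).indicator hB) φ
  simp only [← integral_indicator hB]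
  convert h using 4 with k x x <;> by_cases hx : x ∈ B <;> simp [hx]

theorem ae_integral_eq_zero_of_frequently [OpensMeasurableSpace E]
    (hgen : GeneratesYM μ u ν) {φ : C₀(E, ℝ)} (hφ : ∀ ξ, 0 ≤ φ ξ) {A : Set α}
    (h : ∃ᶠ k in atTop, ∀ᵐ x ∂μ, x ∈ A → φ (u k x) = 0) :
    ∀ᵐ x ∂μ, x ∈ A → ∫ ξ, φ ξ ∂(ν x) = 0 := by
  set B := toMeasurable μ A
  have hrestrict {p : α → Prop} (hp : MeasurableSet {x | p x}) :
      (∀ᵐ x ∂μ, x ∈ A → p x) ↔ ∀ᵐ x ∂μ.restrict B, p x := by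
    rw [Measure.restrict_toMeasurable_of_sFinite, ae_restrict_iff hp]
  have hw : Measurable fun x => ∫ ξ, φ ξ ∂(ν x) := hgen.2.1.2 φ
  have hlim : ∫ x in B, ∫ ξ, φ ξ ∂(ν x) ∂μ = 0 := by
    refine tendsto_nhds_unique_of_frequently_eq
      (hgen.tendsto_setIntegral (measurableSet_toMeasurable μ A) φ) tendsto_const_nhds
      (h.mono fun k hk => integral_eq_zero_of_ae ?_)
    exact (hrestrict (measurableSet_eq_fun (φ.continuous.measurable.comp (hgen.1 k))
      measurable_const)).1 hk
  have hbound : ∀ᵐ x ∂μ, ‖∫ ξ, φ ξ ∂(ν x)‖ ≤ ‖φ‖ := hgen.2.1.1.mono fun x _ => by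
    simpa [ZeroAtInftyContinuousMap.norm_toBCF_eq_norm] using
      norm_integral_le_of_norm_le_const (μ := ν x) (ae_of_all _ φ.toBCF.norm_coe_le_norm)
  have hint : IntegrableOn (fun x => ∫ ξ, φ ξ ∂(ν x)) B μ :=
    (Integrable.of_bound hw.aestronglyMeasurable _ hbound).integrableOn
  rw [hrestrict (measurableSet_eq_fun hw measurable_const)]
  exact (setIntegral_eq_zero_iff_of_nonneg_ae (ae_of_all _ fun x => integral_nonneg hφ) hint).1 hlim

end GeneratesYM

end

section

variable {α E : Type*} [MeasurableSpace α] {μ : Measure α} [IsFiniteMeasure μ]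
  [PseudoMetricSpace E] [ProperSpace E] [MeasurableSpace E] [OpensMeasurableSpace E]
  {u : ℕ → α → E} {ν : α → Measure E} {f : α → E → ℝ} {t : ℝ}

namespace GeneratesYM

theorem ae_measure_closedBall_eq_zero (hgen : GeneratesYM μ u ν)
    (ht : ∃ᶠ k in atTop, ∀ᵐ x ∂μ, f x (u k x) ≤ t) (q : E) {r : ℝ} (hr : 0 < r) :
    ∀ᵐ x ∂μ, ball q (2 * r) ⊆ {ξ | t < f x ξ} → ν x (closedBall q r) = 0 := by
  obtain ⟨φ, hφK, hφU, hφc, hφ01⟩ := exists_continuous_one_zero_of_isCompact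
    (isCompact_closedBall q r) isOpen_ball.isClosed_compl
    (disjoint_compl_right_iff_subset.2 (closedBall_subset_ball (by linarith : r < 2 * r)))
  let ψ : C₀(E, ℝ) := ⟨φ, hφc.is_zero_at_infty⟩
  have hψ0 : ∀ ξ, 0 ≤ ψ ξ := fun ξ => (hφ01 ξ).1
  have hvanish : ∀ᵐ x ∂μ, ball q (2 * r) ⊆ {ξ | t < f x ξ} → ∫ ξ, ψ ξ ∂(ν x) = 0 := by
    refine hgen.ae_integral_eq_zero_of_frequently hψ0 (ht.mono fun k hk => ?_)
    filter_upwards [hk] with x hx hA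
    by_contra hne
    have hmem : u k x ∈ ball q (2 * r) := by_contra fun hout => hne (hφU hout)
    exact (hA hmem).not_ge hx
  filter_upwards [hvanish, hgen.2.1.1] with x hx _ hA
  have hψ := (integral_eq_zero_iff_of_nonneg hψ0 (ψ.toBCF.integrable (ν x))).1 (hx hA)
  refine measure_mono_null (fun ξ hξ => ?_) (ae_iff.1 hψ)
  change φ ξ ≠ 0
  simp [hφK hξ]

theorem ae_measure_lt_eq_zero (hgen : GeneratesYM μ u ν) (hf : ∀ᵐ x ∂μ, LowerSemicontinuous (f x))
    (ht : ∃ᶠ k in atTop, ∀ᵐ x ∂μ, f x (u k x) ≤ t) :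
    ∀ᵐ x ∂μ, ν x {ξ | t < f x ξ} = 0 := by
  obtain ⟨D, hD, hDd⟩ := TopologicalSpace.exists_countable_dense E
  have hballs : ∀ᵐ x ∂μ, ∀ q ∈ D, ∀ r : ℚ, 0 < r →
      ball q (2 * r) ⊆ {ξ | t < f x ξ} → ν x (closedBall q r) = 0 := by
    refine (ae_ball_iff hD).2 fun q _ => ae_all_iff.2 fun r => ?_
    by_cases hr : 0 < r
    · exact (hgen.ae_measure_closedBall_eq_zero ht q (Rat.cast_pos.2 hr)).mono fun x hx _ => hx
    · exact ae_of_all _ fun x h => absurd h hr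
  filter_upwards [hballs, hf] with x hx hfx
  exact measure_eq_zero_of_isOpen_of_measure_closedBall_eq_zero hD hDd (hfx.isOpen_preimage t) hx

theorem essSup_essSup_le_liminf_essSup (hgen : GeneratesYM μ u ν)
    (hf : ∀ᵐ x ∂μ, LowerSemicontinuous (f x)) :
    essSup (fun x => essSup (fun ξ => (f x ξ : EReal)) (ν x)) μ ≤
      liminf (fun k => essSup (fun x => (f x (u k x) : EReal)) μ) atTop := by
  set L := liminf (fun k => essSup (fun x => (f x (u k x) : EReal)) μ) atTop
  have hbound (t : ℚ) : L < (t : ℝ) →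
      ∀ᵐ x ∂μ, essSup (fun ξ => (f x ξ : EReal)) (ν x) ≤ (t : ℝ) := by
    intro ht
    have hfreq : ∃ᶠ k in atTop, ∀ᵐ x ∂μ, f x (u k x) ≤ t :=
      (frequently_lt_of_liminf_lt (by isBoundedDefault) ht).mono fun k hk =>
        (ae_lt_of_essSup_lt hk).mono fun x hx => (EReal.coe_lt_coe_iff.1 hx).le
    filter_upwards [hgen.ae_measure_lt_eq_zero hf hfreq] with x hx
    refine essSup_le_of_ae_le _ (ae_iff.2 ?_)
    simpa [not_le] using hx
  refine essSup_le_of_ae_le _ ?_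
  filter_upwards [ae_all_iff.2 fun t => eventually_imp_distrib_left.2 (hbound t)] with x hx
  by_contra! hlt
  obtain ⟨t, hLt, htx⟩ := EReal.exists_rat_btwn_of_lt hlt
  exact (hx t hLt).not_gt htx

end GeneratesYM

end

theorem liminf_esssup_ge_esssup_young_general {n m : ℕ}
    (U : Set (Fin n → ℝ)) (hUfin : volume U < ⊤)
    (f : (Fin n → ℝ) → (Fin m → ℝ) → ℝ)
    (hflsc : ∀ᵐ x ∂(volume.restrict U), LowerSemicontinuous (f x))
    (u : ℕ → (Fin n → ℝ) → (Fin m → ℝ))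
    (ν : (Fin n → ℝ) → Measure (Fin m → ℝ))
    (hgen : GeneratesYM (volume.restrict U) u ν) :
    essSup (fun x => essSup (fun ξ => (f x ξ : EReal)) (ν x)) (volume.restrict U) ≤
      liminf (fun k => essSup (fun x => (f x (u k x) : EReal)) (volume.restrict U)) atTop := by
  have : IsFiniteMeasure (volume.restrict U) := isFiniteMeasure_restrict.2 hUfin.ne
  exact hgen.essSup_essSup_le_liminf_essSup hflsc

/-- **Lemma (Barron–Jensen type lower bound for supremal functionals via Young measures).**
Let `U ⊂ ℝ^n` be an open set with finite measure and `f : U × ℝ^m → ℝ` a normal integrand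
bounded from below.  If `(u_k)` is a uniformly bounded sequence in `L^∞(U;ℝ^m)` generating the
Young measure `ν = {ν_x}`, then
`liminf_k esssup_{x ∈ U} f(x, u_k(x)) ≥ esssup_{x ∈ U} (ν_x-esssup_ξ f(x,ξ))`. -/
theorem liminf_esssup_ge_esssup_young {n m : ℕ}
    (U : Set (Fin n → ℝ)) (hU : IsOpen U) (hUfin : volume U < ⊤)
    (f : (Fin n → ℝ) → (Fin m → ℝ) → ℝ)
    (hfmeas : Measurable fun p : (Fin n → ℝ) × (Fin m → ℝ) => f p.1 p.2)
    (hflsc : ∀ᵐ x ∂(volume.restrict U), LowerSemicontinuous (f x))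
    (hfbdd : ∃ c : ℝ, ∀ x ξ, c ≤ f x ξ)
    (u : ℕ → (Fin n → ℝ) → (Fin m → ℝ))
    (hubdd : ∃ C : ℝ, ∀ k, ∀ᵐ x ∂(volume.restrict U), ‖u k x‖ ≤ C)
    (ν : (Fin n → ℝ) → Measure (Fin m → ℝ))
    (hgen : GeneratesYM (volume.restrict U) u ν) :
    essSup (fun x => essSup (fun ξ => (f x ξ : EReal)) (ν x)) (volume.restrict U) ≤
      liminf (fun k => essSup (fun x => (f x (u k x) : EReal)) (volume.restrict U)) atTop :=
  liminf_esssup_ge_esssup_young_general U hUfin f hflsc u ν hgen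

end
end

section
/- Let W : ℝ^{d×N} × ℝ^{d×N} → ℝ be a Borel function, bounded from below, which is separately level convex, i.e., for every c ∈ ℝ and every fixed ζ (resp. ξ) the sublevel sets {ξ : W(ξ,ζ) ≤ c} and {ζ : W(ξ,ζ) ≤ c} are convex. Then for every pair of probability measures ν, μ on ℝ^{d×N} with finite first moments, W([ν],[μ]) ≤ (ν⊗μ)-esssup_{(ξ,ζ)∈ℝ^{d×N}×ℝ^{d×N}} W(ξ,ζ), where [ν] = ∫_{ℝ^{d×N}} ξ dν(ξ) and [μ] = ∫_{ℝ^{d×N}} ζ dμ(ζ) denote the barycenters. In particular, every separately level convex lower semicontinuous function bounded from below is separately curl Young quasiconvex. -/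
open MeasureTheory Filter Topology Bornology ZeroAtInfty NNReal ENNReal

noncomputable section

/-- The gradient matrix `∇u(x) ∈ ℝ^{d×N}` of `u : ℝ^N → ℝ^d`. -/
def gradMatrix {N d : ℕ} (u : (Fin N → ℝ) → (Fin d → ℝ)) (x : Fin N → ℝ) :
    Fin d → Fin N → ℝ :=
  fun i j => fderiv ℝ u x (Pi.single j 1) i

/-- A `W^{1,∞}`-gradient Young measure on a set `Ω ⊆ ℝ^N`: a Young measure generated by the
gradients of a bounded sequence in `W^{1,∞}(Ω;ℝ^d)`. -/
def IsGradientYoungMeasure {N d : ℕ} (Ω : Set (Fin N → ℝ))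
    (ν : (Fin N → ℝ) → Measure (Fin d → Fin N → ℝ)) : Prop :=
  ∃ u : ℕ → (Fin N → ℝ) → (Fin d → ℝ),
    (∃ C : ℝ≥0, ∀ j, LipschitzWith C (u j) ∧ ∀ x, ‖u j x‖ ≤ C) ∧
    GeneratesYM (volume.restrict Ω) (fun j x => gradMatrix (u j) x) ν

/-- A homogeneous `W^{1,∞}`-gradient Young measure: a probability measure `ν₀` on `ℝ^{d×N}`
such that the constant family `ν_x = ν₀` is a gradient Young measure on some bounded
nonempty open set. -/
def IsHomogeneousGradientYM {N d : ℕ} (ν : Measure (Fin d → Fin N → ℝ)) : Prop :=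
  IsProbabilityMeasure ν ∧ ∃ Ω : Set (Fin N → ℝ), IsOpen Ω ∧ Ω.Nonempty ∧ IsBounded Ω ∧
    IsGradientYoungMeasure Ω (fun _ => ν)

/-- `W : ℝ^{d×N} × ℝ^{d×N} → ℝ` is separately curl Young quasiconvex. -/
def SeparatelyCurlYoungQuasiconvex {N d : ℕ}
    (W : (Fin d → Fin N → ℝ) → (Fin d → Fin N → ℝ) → ℝ) : Prop :=
  ∀ ν μ : Measure (Fin d → Fin N → ℝ),
    IsHomogeneousGradientYM ν → IsHomogeneousGradientYM μ →
    (W (∫ ξ, ξ ∂ν) (∫ ζ, ζ ∂μ) : EReal) ≤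
      essSup (fun ξ => essSup (fun ζ => (W ξ ζ : EReal)) μ) ν


/-- `W` is separately level convex: all sublevel sets in each variable separately are convex. -/
def SeparatelyLevelConvex {E F : Type*} [AddCommMonoid E] [Module ℝ E]
    [AddCommMonoid F] [Module ℝ F] (W : E → F → ℝ) : Prop :=
  ∀ c : ℝ, (∀ ζ, Convex ℝ {ξ | W ξ ζ ≤ c}) ∧ (∀ ξ, Convex ℝ {ζ | W ξ ζ ≤ c})

/-! Jensen's inequality applied to one variable at a time: a.e. the pair lies in a sublevel set
`{W ≤ m}`, whose sections are closed (lower semicontinuity) and convex, so integrating first in `ζ`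
and then in `ξ` keeps the barycenters in that sublevel set. Letting `m` decrease to the essential
supremum gives the inequality. A homogeneous gradient Young measure has finite first moment
because it is carried by the closed ball containing the generating gradients, whose bound is the
uniform Lipschitz constant. -/

section Jensen

variable {E F : Type*} [NormedAddCommGroup E] [NormedSpace ℝ E] [CompleteSpace E]
  [MeasurableSpace E] [NormedAddCommGroup F] [NormedSpace ℝ F] [CompleteSpace F]
  [MeasurableSpace F] {W : E → F → ℝ} {ν : Measure E} {μ : Measure F}
  [IsProbabilityMeasure ν] [IsProbabilityMeasure μ]

theorem SeparatelyLevelConvex.map_integral_le_of_ae_ae_le (hWlc : SeparatelyLevelConvex W)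
    (hWlsc : LowerSemicontinuous fun p : E × F => W p.1 p.2)
    (hν : Integrable id ν) (hμ : Integrable id μ) {m : ℝ} (h : ∀ᵐ ξ ∂ν, ∀ᵐ ζ ∂μ, W ξ ζ ≤ m) :
    W (∫ ξ, ξ ∂ν) (∫ ζ, ζ ∂μ) ≤ m := by
  have isClosed_left (ζ : F) : IsClosed {ξ | W ξ ζ ≤ m} :=
    (hWlsc.isClosed_preimage m).preimage (continuous_id.prodMk continuous_const)
  have isClosed_right (ξ : E) : IsClosed {ζ | W ξ ζ ≤ m} :=
    (hWlsc.isClosed_preimage m).preimage (Continuous.prodMk_right ξ)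
  have h_right : ∀ᵐ ξ ∂ν, W ξ (∫ ζ, ζ ∂μ) ≤ m :=
    h.mono fun ξ hξ => ((hWlc m).2 ξ).integral_mem (f := id) (isClosed_right ξ) hξ hμ
  exact ((hWlc m).1 _).integral_mem (f := id) (isClosed_left _) h_right hν

theorem SeparatelyLevelConvex.map_integral_le_essSup_prod (hWlc : SeparatelyLevelConvex W)
    (hWlsc : LowerSemicontinuous fun p : E × F => W p.1 p.2)
    (hν : Integrable id ν) (hμ : Integrable id μ) :
    (W (∫ ξ, ξ ∂ν) (∫ ζ, ζ ∂μ) : EReal) ≤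
      essSup (fun p : E × F => (W p.1 p.2 : EReal)) (ν.prod μ) := by
  refine EReal.le_of_forall_lt_iff_le.1 fun m hm => EReal.coe_le_coe_iff.2 ?_
  refine hWlc.map_integral_le_of_ae_ae_le hWlsc hν hμ
    (Measure.ae_ae_of_ae_prod (p := fun p : E × F => W p.1 p.2 ≤ m) ?_)
  exact (ae_lt_of_essSup_lt hm).mono fun p hp => EReal.coe_le_coe_iff.1 hp.le

theorem SeparatelyLevelConvex.map_integral_le_essSup_essSup (hWlc : SeparatelyLevelConvex W)
    (hWlsc : LowerSemicontinuous fun p : E × F => W p.1 p.2)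
    (hν : Integrable id ν) (hμ : Integrable id μ) :
    (W (∫ ξ, ξ ∂ν) (∫ ζ, ζ ∂μ) : EReal) ≤
      essSup (fun ξ => essSup (fun ζ => (W ξ ζ : EReal)) μ) ν := by
  refine EReal.le_of_forall_lt_iff_le.1 fun m hm => EReal.coe_le_coe_iff.2 ?_
  refine hWlc.map_integral_le_of_ae_ae_le hWlsc hν hμ ?_
  filter_upwards [ae_lt_of_essSup_lt hm] with ξ hξ
  exact (ae_lt_of_essSup_lt hξ).mono fun ζ hζ => EReal.coe_le_coe_iff.1 hζ.le

end Jensen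

theorem measure_compl_eq_zero_of_integral_eq_zero {X : Type*} [TopologicalSpace X]
    [MeasurableSpace X] [BorelSpace X] [LocallyCompactSpace X] [RegularSpace X]
    (ν : Measure X) [IsFiniteMeasure ν] [ν.InnerRegularCompactLTTop] {s : Set X}
    (hs : IsClosed s) (h : ∀ φ : C₀(X, ℝ), Set.EqOn φ 0 s → ∫ x, φ x ∂ν = 0) :
    ν sᶜ = 0 := by
  rw [hs.isOpen_compl.measurableSet.measure_eq_iSup_isCompact_of_ne_top (measure_ne_top ν _)]
  refine ENNReal.iSup_eq_zero.2 fun K => ENNReal.iSup_eq_zero.2 fun hKs =>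
    ENNReal.iSup_eq_zero.2 fun hK => ?_
  obtain ⟨f, hfK, hfs, hf_supp, hf_range⟩ := exists_continuous_one_zero_of_isCompact hK hs
    (Set.subset_compl_iff_disjoint_right.mp hKs)
  have hf_int : ∫ x, f x ∂ν = 0 := h ⟨f, hf_supp.is_zero_at_infty⟩ hfs
  refine nonpos_iff_eq_zero.1 ?_
  calc ν K ≤ ENNReal.ofReal (∫ x, f x ∂ν) :=
        (f.continuous.integrable_of_hasCompactSupport hf_supp).measure_le_integral
          (Eventually.of_forall fun x => (hf_range x).1) fun x hx => (hfK hx).ge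
    _ = 0 := by rw [hf_int, ENNReal.ofReal_zero]

theorem GeneratesYM.integral_eq_zero_of_eqOn {α E : Type*} [MeasurableSpace α]
    [MeasurableSpace E] [TopologicalSpace E] {μ : Measure α} [IsFiniteMeasure μ] [NeZero μ]
    {z : ℕ → α → E} {ν : Measure E} (hz : GeneratesYM μ z fun _ => ν) {s : Set E}
    (hzs : ∀ j x, z j x ∈ s) (φ : C₀(E, ℝ)) (hφ : Set.EqOn φ 0 s) :
    ∫ ξ, φ ξ ∂ν = 0 := by
  have hlim := hz.2.2 (fun _ => 1) (integrable_const 1) φ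
  have hzero : (fun j => ∫ x, (1 : ℝ) * φ (z j x) ∂μ) = fun _ => 0 := by
    funext j
    simp [hφ (hzs j _)]
  rw [hzero] at hlim
  have := tendsto_nhds_unique hlim tendsto_const_nhds
  simpa [measureReal_univ_ne_zero] using this.symm

theorem norm_gradMatrix_le_of_lipschitzWith {N d : ℕ} {u : (Fin N → ℝ) → (Fin d → ℝ)} {C : ℝ≥0}
    (hu : LipschitzWith C u) (x : Fin N → ℝ) : ‖gradMatrix u x‖ ≤ C := by
  refine (pi_norm_le_iff_of_nonneg C.coe_nonneg).2 fun i =>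
    (pi_norm_le_iff_of_nonneg C.coe_nonneg).2 fun j => ?_
  calc ‖gradMatrix u x i j‖ ≤ ‖fderiv ℝ u x (Pi.single j 1)‖ := norm_le_pi_norm _ i
    _ ≤ ‖fderiv ℝ u x‖ * ‖(Pi.single j 1 : Fin N → ℝ)‖ := (fderiv ℝ u x).le_opNorm _
    _ ≤ C := by simpa [Pi.norm_single] using norm_fderiv_le_of_lipschitz ℝ hu

theorem IsHomogeneousGradientYM.integrable_id {N d : ℕ} {ν : Measure (Fin d → Fin N → ℝ)}
    (hν : IsHomogeneousGradientYM ν) : Integrable id ν := by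
  obtain ⟨hν_prob, Ω, hΩ_open, hΩ_ne, hΩ_bdd, u, ⟨C, hu⟩, hgen⟩ := hν
  have : IsFiniteMeasure (volume.restrict Ω) :=
    isFiniteMeasure_restrict.2 hΩ_bdd.measure_lt_top.ne
  have : NeZero (volume.restrict Ω) :=
    ⟨Measure.restrict_eq_zero.not.2 (hΩ_open.measure_ne_zero volume hΩ_ne)⟩
  have hball : ∀ j x, gradMatrix (u j) x ∈ Metric.closedBall 0 (C : ℝ) := fun j x =>
    mem_closedBall_zero_iff.2 (norm_gradMatrix_le_of_lipschitzWith (hu j).1 x)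
  have hcompl := measure_compl_eq_zero_of_integral_eq_zero ν Metric.isClosed_closedBall
    (hgen.integral_eq_zero_of_eqOn hball)
  have hbound : ∀ᵐ ξ ∂ν, ‖id ξ‖ ≤ C :=
    (measure_eq_zero_iff_ae_notMem.1 hcompl).mono fun ξ hξ => by simpa using hξ
  exact Integrable.of_bound aestronglyMeasurable_id C hbound

theorem separatelyLevelConvex_jensen_and_curlYoungQuasiconvex_general {d N : ℕ}
    (W : (Fin d → Fin N → ℝ) → (Fin d → Fin N → ℝ) → ℝ)
    (hWlsc : LowerSemicontinuous fun p : (Fin d → Fin N → ℝ) × (Fin d → Fin N → ℝ) =>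
      W p.1 p.2)
    (hWlc : SeparatelyLevelConvex W) :
    (∀ ν μ : Measure (Fin d → Fin N → ℝ), IsProbabilityMeasure ν → IsProbabilityMeasure μ →
      Integrable id ν → Integrable id μ →
      (W (∫ ξ, ξ ∂ν) (∫ ζ, ζ ∂μ) : EReal) ≤
        essSup (fun p : (Fin d → Fin N → ℝ) × (Fin d → Fin N → ℝ) => (W p.1 p.2 : EReal))
          (ν.prod μ)) ∧
    SeparatelyCurlYoungQuasiconvex W := by
  refine ⟨fun ν μ _ _ hν hμ => hWlc.map_integral_le_essSup_prod hWlsc hν hμ,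
    fun ν μ hν hμ => ?_⟩
  have := hν.1
  have := hμ.1
  exact hWlc.map_integral_le_essSup_essSup hWlsc hν.integrable_id hμ.integrable_id

/-- **Separately level convex functions satisfy the nonlocal supremal Jensen inequality.**
If `W : ℝ^{d×N} × ℝ^{d×N} → ℝ` is Borel, bounded from below, lower semicontinuous and
separately level convex, then for all probability measures `ν, μ` with finite first moments
`W([ν],[μ]) ≤ (ν ⊗ μ)-esssup W`; in particular, `W` is separately curl Young quasiconvex. -/
theorem separatelyLevelConvex_jensen_and_curlYoungQuasiconvex {d N : ℕ}
    (W : (Fin d → Fin N → ℝ) → (Fin d → Fin N → ℝ) → ℝ)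
    (hWmeas : Measurable fun p : (Fin d → Fin N → ℝ) × (Fin d → Fin N → ℝ) => W p.1 p.2)
    (hWbdd : ∃ c : ℝ, ∀ ξ ζ, c ≤ W ξ ζ)
    (hWlsc : LowerSemicontinuous fun p : (Fin d → Fin N → ℝ) × (Fin d → Fin N → ℝ) =>
      W p.1 p.2)
    (hWlc : SeparatelyLevelConvex W) :
    (∀ ν μ : Measure (Fin d → Fin N → ℝ), IsProbabilityMeasure ν → IsProbabilityMeasure μ →
      Integrable id ν → Integrable id μ →
      (W (∫ ξ, ξ ∂ν) (∫ ζ, ζ ∂μ) : EReal) ≤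
        essSup (fun p : (Fin d → Fin N → ℝ) × (Fin d → Fin N → ℝ) => (W p.1 p.2 : EReal))
          (ν.prod μ)) ∧
    SeparatelyCurlYoungQuasiconvex W :=
  separatelyLevelConvex_jensen_and_curlYoungQuasiconvex_general W hWlsc hWlc
end
end
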